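/- Let α > −1 be fixed and let λ : ℕ → (0,1) satisfy λ(n)·(λ(n)·n)^α ≤ 1 for all n and β_n → ∞, where β_n = λ(n)^{2+α}·n^{1+α}. For each n, let T_n be the survival time of the star infection chain with n leaves started at a state (1, I₀(n)) with I₀(n) ≥ λ(n)n/4 (center infected and at least λ(n)n/4 infected leaves). Then there exists a constant c > 0 such that Pr[T_n ≥ 2^{c·√β_n}] → 1 as n → ∞. -/

import Mathlib

open scoped ENNReal
open Filter Asymptotics

noncomputable def markovDist {S : Type*} [DecidableEq S] (step : S → S → ℝ≥0∞) (s0 : S) :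
    ℕ → S → ℝ≥0∞
  | 0 => fun J => if J = s0 then 1 else 0
  | t + 1 => fun J => ∑' s : S, markovDist step s0 t s * step s J

open Classical in
noncomputable def absorbStep {S : Type*} (A : Set S) (step : S → S → ℝ≥0∞) :
    S → S → ℝ≥0∞ :=
  fun s => if s ∈ A then (fun J => if J = s then 1 else 0) else step s

noncomputable def hitProb {S : Type*} [DecidableEq S] (step : S → S → ℝ≥0∞) (s0 : S)
    (A : Set S) : ℝ≥0∞ :=
  ⨆ t : ℕ, ∑' s : S, A.indicator (markovDist (absorbStep A step) s0 t) s

noncomputable def cliqueStep (n : ℕ) (lam alpha : ℝ) (I : ℕ) : ℕ → ℝ≥0∞ :=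
  if I = 0 ∨ n < I then fun J => if J = I then 1 else 0
  else fun J =>
    if J = I + 1 then
      ENNReal.ofReal (lam * (I : ℝ) ^ (1 + alpha) * ((n : ℝ) - I) /
        (lam * (I : ℝ) ^ (1 + alpha) * ((n : ℝ) - I) + I))
    else if J = I - 1 then
      ENNReal.ofReal ((I : ℝ) /
        (lam * (I : ℝ) ^ (1 + alpha) * ((n : ℝ) - I) + I))
    else 0

noncomputable def cliqueDist (n : ℕ) (lam alpha : ℝ) (x0 : ℕ) : ℕ → ℕ → ℝ≥0∞ :=
  markovDist (cliqueStep n lam alpha) x0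

noncomputable def cliqueET (n : ℕ) (lam alpha : ℝ) (x0 : ℕ) : ℝ≥0∞ :=
  ∑' t : ℕ, (1 - cliqueDist n lam alpha x0 t 0)

noncomputable def starStep (n : ℕ) (lam alpha : ℝ) : Bool × ℕ → Bool × ℕ → ℝ≥0∞
  | (false, I) =>
    if I = 0 ∨ n < I then fun J => if J = ((false : Bool), I) then 1 else 0
    else fun J =>
      if J = (false, I - 1) then
        ENNReal.ofReal ((I : ℝ) / ((I : ℝ) + lam * (I : ℝ) ^ (1 + alpha)))
      else if J = (true, I) then
        ENNReal.ofReal (lam * (I : ℝ) ^ (1 + alpha) / ((I : ℝ) + lam * (I : ℝ) ^ (1 + alpha)))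
      else 0
  | (true, I) =>
    if n < I then fun J => if J = ((true : Bool), I) then 1 else 0
    else fun J =>
      if J = (true, I + 1) then
        ENNReal.ofReal (lam * ((n : ℝ) - I) / (lam * ((n : ℝ) - I) + I + 1))
      else if J = (true, I - 1) then
        ENNReal.ofReal ((I : ℝ) / (lam * ((n : ℝ) - I) + I + 1))
      else if J = (false, I) then
        ENNReal.ofReal (1 / (lam * ((n : ℝ) - I) + I + 1))
      else 0

noncomputable def starDist (n : ℕ) (lam alpha : ℝ) (s0 : Bool × ℕ) :
    ℕ → Bool × ℕ → ℝ≥0∞ :=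
  markovDist (starStep n lam alpha) s0

noncomputable def starET (n : ℕ) (lam alpha : ℝ) (s0 : Bool × ℕ) : ℝ≥0∞ :=
  ∑' t : ℕ, (1 - starDist n lam alpha s0 t ((false : Bool), 0))

/-!
A Lyapunov-function argument. Put `x = λn`, `s = √β` and `ρ = 1 - s/x`, and give the state with
`I` infected leaves the weight `ρ ^ (min I (x/4) - x/8)` (doubled and capped at `1` when the
center is healthy). While the center is infected, leaves get infected at rate about `x` and heal
at rate `I ≤ x/4`; while it is healthy, it is reinfected at rate `λ I^(1+α)`, which beats
`2 I (1 - ρ) = 2 I s/x` because `λ I^α` is within a constant factor of `β/x = s²/x`. So the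
expected weight grows by at most its floor `m = ρ ^ (x/4 - x/8) ≤ e^(-s/16)` per step. The
extinct state has weight `1` and the start has weight `m`, so extinction within `t` steps has
probability at most `m (1 + t)`, which is negligible for `t = 2^(s/32)`.
-/

section Markov

variable {S : Type*} [DecidableEq S] {step : S → S → ℝ≥0∞}

theorem tsum_markovDist_succ_mul (s0 : S) (t : ℕ) (g : S → ℝ≥0∞) :
    ∑' J, markovDist step s0 (t + 1) J * g J =
      ∑' s, markovDist step s0 t s * ∑' J, step s J * g J := by
  simp only [markovDist, ← ENNReal.tsum_mul_right, ← ENNReal.tsum_mul_left, mul_assoc]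
  exact ENNReal.tsum_comm

theorem tsum_markovDist_le_one (hrow : ∀ s, ∑' J, step s J ≤ 1) (s0 : S) (t : ℕ) :
    ∑' s, markovDist step s0 t s ≤ 1 := by
  induction t with
  | zero => simp [markovDist]
  | succ t ih =>
    simpa using (tsum_markovDist_succ_mul s0 t 1).le.trans
      ((ENNReal.tsum_le_tsum fun s => mul_le_of_le_one_right' (by simpa using hrow s)).trans
        (by simpa using ih))

theorem tsum_markovDist_mul_le (hrow : ∀ s, ∑' J, step s J ≤ 1) {g : S → ℝ≥0∞} {ε : ℝ≥0∞}
    (hdrift : ∀ s, ∑' J, step s J * g J ≤ g s + ε) (s0 : S) (t : ℕ) :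
    ∑' s, markovDist step s0 t s * g s ≤ g s0 + t * ε := by
  induction t with
  | zero => simp [markovDist, ite_mul]
  | succ t ih =>
    calc ∑' J, markovDist step s0 (t + 1) J * g J
        = ∑' s, markovDist step s0 t s * ∑' J, step s J * g J := tsum_markovDist_succ_mul s0 t g
      _ ≤ ∑' s, (markovDist step s0 t s * g s + markovDist step s0 t s * ε) := by
          gcongr with s
          rw [← mul_add]
          exact mul_le_mul_right (hdrift s) _
      _ = ∑' s, markovDist step s0 t s * g s + (∑' s, markovDist step s0 t s) * ε := by
          rw [ENNReal.tsum_add, ENNReal.tsum_mul_right]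
      _ ≤ g s0 + t * ε + 1 * ε := by gcongr; exact tsum_markovDist_le_one hrow s0 t
      _ = g s0 + ↑(t + 1) * ε := by push_cast; ring

theorem markovDist_le_of_drift (hrow : ∀ s, ∑' J, step s J ≤ 1) {g : S → ℝ≥0∞} {ε : ℝ≥0∞}
    (hdrift : ∀ s, ∑' J, step s J * g J ≤ g s + ε) (s0 : S) {a : S} (ha : 1 ≤ g a) (t : ℕ) :
    markovDist step s0 t a ≤ g s0 + t * ε :=
  calc markovDist step s0 t a ≤ markovDist step s0 t a * g a := le_mul_of_one_le_right' ha
    _ ≤ ∑' s, markovDist step s0 t s * g s := ENNReal.le_tsum a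
    _ ≤ g s0 + t * ε := tsum_markovDist_mul_le hrow hdrift s0 t

theorem tsum_ite_ite_mul {a b : S} (hab : a ≠ b) (x y : ℝ≥0∞) (g : S → ℝ≥0∞) :
    ∑' J, (if J = a then x else if J = b then y else 0) * g J = x * g a + y * g b := by
  rw [tsum_eq_sum (s := {a, b}) fun J hJ => by simp_all [not_or]]
  simp [Finset.sum_pair hab, hab.symm]

theorem tsum_ite_ite_ite_mul {a b c : S} (hab : a ≠ b) (hac : a ≠ c) (hbc : b ≠ c)
    (x y z : ℝ≥0∞) (g : S → ℝ≥0∞) :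
    ∑' J, (if J = a then x else if J = b then y else if J = c then z else 0) * g J =
      x * g a + y * g b + z * g c := by
  rw [tsum_eq_sum (s := {a, b, c}) fun J hJ => by simp_all [not_or]]
  rw [Finset.sum_insert (by simp [hab, hac]), Finset.sum_pair hbc]
  simp [hab.symm, hac.symm, hbc.symm, add_assoc]

end Markov

section StarStep

variable {n : ℕ} {lam alpha : ℝ}

theorem tsum_starStep_true_mul (hlam : 0 < lam) {I : ℕ} (hI : I ≤ n) {g : Bool × ℕ → ℝ}
    (hg : ∀ s, 0 ≤ g s) :
    ∑' J, starStep n lam alpha (true, I) J * ENNReal.ofReal (g J) =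
      ENNReal.ofReal ((lam * (n - I) * g (true, I + 1) + I * g (true, I - 1) + g (false, I)) /
        (lam * (n - I) + I + 1)) := by
  have hL : 0 ≤ lam * ((n : ℝ) - I) := mul_nonneg hlam.le (by simp [hI])
  have hr : 0 < lam * ((n : ℝ) - I) + I + 1 := by positivity
  have := hg (true, I + 1); have := hg (true, I - 1); have := hg (false, I)
  simp only [starStep, not_lt.mpr hI, if_false]
  rw [tsum_ite_ite_ite_mul (by simp; omega) (by simp) (by simp)]
  rw [← ENNReal.ofReal_mul (by positivity), ← ENNReal.ofReal_mul (by positivity),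
    ← ENNReal.ofReal_mul (by positivity), ← ENNReal.ofReal_add (by positivity) (by positivity),
    ← ENNReal.ofReal_add (by positivity) (by positivity)]
  congr 1
  field_simp

theorem tsum_starStep_false_mul (hlam : 0 < lam) {I : ℕ} (hI : I ≠ 0) (hIn : I ≤ n)
    {g : Bool × ℕ → ℝ} (hg : ∀ s, 0 ≤ g s) :
    ∑' J, starStep n lam alpha (false, I) J * ENNReal.ofReal (g J) =
      ENNReal.ofReal ((I * g (false, I - 1) + lam * (I : ℝ) ^ (1 + alpha) * g (true, I)) /
        (I + lam * (I : ℝ) ^ (1 + alpha))) := by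
  have hw : 0 < lam * (I : ℝ) ^ (1 + alpha) := by positivity
  have := hg (false, I - 1); have := hg (true, I)
  simp only [starStep, hI, not_lt.mpr hIn, or_self, if_false]
  rw [tsum_ite_ite_mul (by simp)]
  rw [← ENNReal.ofReal_mul (by positivity), ← ENNReal.ofReal_mul (by positivity),
    ← ENNReal.ofReal_add (by positivity) (by positivity)]
  congr 1
  field_simp

theorem tsum_starStep_le_one (hlam : 0 < lam) (s : Bool × ℕ) :
    ∑' J, starStep n lam alpha s J ≤ 1 := by
  have hg : ∀ s : Bool × ℕ, 0 ≤ (1 : Bool × ℕ → ℝ) s := fun _ => zero_le_one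
  obtain ⟨_ | _, I⟩ := s
  · by_cases h : I = 0 ∨ n < I
    · simp [starStep, h]
    · push Not at h
      have hw : 0 < lam * (I : ℝ) ^ (1 + alpha) := by have := h.1; positivity
      simpa [div_self (by positivity : (I : ℝ) + lam * (I : ℝ) ^ (1 + alpha) ≠ 0)] using
        (tsum_starStep_false_mul (alpha := alpha) hlam h.1 h.2 hg).le
  · by_cases h : n < I
    · simp [starStep, h]
    · have hr : 0 < lam * ((n : ℝ) - I) + I + 1 := by
        have : (I : ℝ) ≤ n := by exact_mod_cast not_lt.mp h
        nlinarith
      simpa [div_self hr.ne'] using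
        (tsum_starStep_true_mul (alpha := alpha) hlam (not_lt.mp h) hg).le

end StarStep

def leafPotential (lo hi : ℕ) (ρ : ℝ) (I : ℕ) : ℝ := ρ ^ (min I hi - lo)

def starPotential (lo hi : ℕ) (ρ : ℝ) : Bool × ℕ → ℝ
  | (true, I) => leafPotential lo hi ρ I
  | (false, I) => min 1 (2 * leafPotential lo hi ρ I)

section Potential

variable {lo hi : ℕ} {ρ : ℝ}

theorem leafPotential_pos (hρ : 0 < ρ) (I : ℕ) : 0 < leafPotential lo hi ρ I :=
  pow_pos hρ _

theorem leafPotential_le_one (hρ : 0 ≤ ρ) (hρ1 : ρ ≤ 1) (I : ℕ) : leafPotential lo hi ρ I ≤ 1 :=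
  pow_le_one₀ hρ hρ1

theorem leafPotential_of_le_lo {I : ℕ} (h : I ≤ lo) : leafPotential lo hi ρ I = 1 := by
  simp [leafPotential, show min I hi - lo = 0 by omega]

theorem leafPotential_of_hi_le {I : ℕ} (h : hi ≤ I) : leafPotential lo hi ρ I = ρ ^ (hi - lo) := by
  simp [leafPotential, h]

theorem leafPotential_succ {I : ℕ} (hlo : lo ≤ I) (hhi : I < hi) :
    leafPotential lo hi ρ (I + 1) = ρ * leafPotential lo hi ρ I := by
  rw [leafPotential, leafPotential, ← pow_succ',
    show min (I + 1) hi - lo = min I hi - lo + 1 by omega]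

theorem mul_leafPotential_pred_le (hρ : 0 ≤ ρ) (hρ1 : ρ ≤ 1) (I : ℕ) :
    ρ * leafPotential lo hi ρ (I - 1) ≤ leafPotential lo hi ρ I := by
  rw [leafPotential, leafPotential, ← pow_succ']
  exact pow_le_pow_of_le_one hρ hρ1 (by omega)

theorem starPotential_nonneg (hρ : 0 ≤ ρ) (s : Bool × ℕ) : 0 ≤ starPotential lo hi ρ s := by
  obtain ⟨_ | _, I⟩ := s <;> simp [starPotential, leafPotential] <;> positivity

theorem starPotential_true_drift (hρ : 1 / 2 ≤ ρ) (hρ1 : ρ ≤ 1) {L : ℝ} (hL : 0 ≤ L) {I : ℕ}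
    (hgrow : lo < I → I < hi → ρ + I * (1 - ρ) ≤ ρ * L * (1 - ρ)) :
    L * starPotential lo hi ρ (true, I + 1) + I * starPotential lo hi ρ (true, I - 1) +
        starPotential lo hi ρ (false, I) ≤
      (starPotential lo hi ρ (true, I) + ρ ^ (hi - lo)) * (L + I + 1) := by
  have hρ0 : 0 < ρ := by linarith
  have hm : 0 ≤ ρ ^ (hi - lo) := by positivity
  have hI : (0 : ℝ) ≤ I := Nat.cast_nonneg I
  have hpred := mul_leafPotential_pred_le (lo := lo) (hi := hi) hρ0.le hρ1 I
  have hfalse : starPotential lo hi ρ (false, I) ≤ 2 * leafPotential lo hi ρ I := min_le_right _ _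
  simp only [starPotential] at hfalse ⊢
  rcases le_or_gt I lo with hIlo | hIlo
  · have h1 := leafPotential_le_one (lo := lo) (hi := hi) hρ0.le hρ1 (I + 1)
    have h2 := leafPotential_le_one (lo := lo) (hi := hi) hρ0.le hρ1 (I - 1)
    have h3 : min 1 (2 * leafPotential lo hi ρ I) ≤ 1 := min_le_left _ _
    rw [leafPotential_of_le_lo hIlo] at *
    nlinarith
  rcases lt_or_ge I hi with hIhi | hIhi
  · have hF := leafPotential_pos (lo := lo) (hi := hi) hρ0 I
    rw [leafPotential_succ hIlo.le hIhi]
    have key := mul_le_mul_of_nonneg_left (hgrow hIlo hIhi) hF.le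
    have hmain : ρ * (L * (ρ * leafPotential lo hi ρ I) + I * leafPotential lo hi ρ (I - 1) +
        min 1 (2 * leafPotential lo hi ρ I)) ≤ ρ * (leafPotential lo hi ρ I * (L + I + 1)) := by
      nlinarith [mul_le_mul_of_nonneg_left hpred hI, mul_le_mul_of_nonneg_left hfalse hρ0.le]
    nlinarith [le_of_mul_le_mul_left hmain hρ0]
  · have hF := leafPotential_pos (lo := lo) (hi := hi) hρ0 (I - 1)
    rw [leafPotential_of_hi_le hIhi, leafPotential_of_hi_le (by omega : hi ≤ I + 1)] at *
    have hprev : leafPotential lo hi ρ (I - 1) ≤ 2 * ρ ^ (hi - lo) := by nlinarith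
    nlinarith [mul_le_mul_of_nonneg_left hprev hI]

theorem starPotential_false_drift (hρ : 1 / 2 ≤ ρ) (hρ1 : ρ ≤ 1) {w : ℝ} (hw : 0 ≤ w) {I : ℕ}
    (hinf : lo < I → I ≤ hi → 2 * I * (1 - ρ) ≤ ρ * w) :
    I * starPotential lo hi ρ (false, I - 1) + w * starPotential lo hi ρ (true, I) ≤
      (starPotential lo hi ρ (false, I) + ρ ^ (hi - lo)) * (I + w) := by
  have hρ0 : 0 < ρ := by linarith
  have hm : 0 ≤ ρ ^ (hi - lo) := by positivity
  have hI : (0 : ℝ) ≤ I := Nat.cast_nonneg I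
  have hF := leafPotential_pos (lo := lo) (hi := hi) hρ0 I
  have hprev : starPotential lo hi ρ (false, I - 1) ≤ 2 * leafPotential lo hi ρ (I - 1) :=
    min_le_right _ _
  simp only [starPotential] at hprev ⊢
  rcases le_or_gt 1 (2 * leafPotential lo hi ρ I) with hcap | hcap
  · have h1 : min 1 (2 * leafPotential lo hi ρ (I - 1)) ≤ 1 := min_le_left _ _
    have h2 := leafPotential_le_one (lo := lo) (hi := hi) hρ0.le hρ1 I
    rw [min_eq_left hcap]
    nlinarith
  have hIlo : lo < I := by
    by_contra! h
    rw [leafPotential_of_le_lo h] at hcap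
    linarith
  rw [min_eq_right hcap.le]
  rcases le_or_gt I hi with hIhi | hIhi
  · have hpred := mul_leafPotential_pred_le (lo := lo) (hi := hi) hρ0.le hρ1 I
    have key := mul_le_mul_of_nonneg_left (hinf hIlo hIhi) hF.le
    have hmain :
        ρ * (I * min 1 (2 * leafPotential lo hi ρ (I - 1)) + w * leafPotential lo hi ρ I) ≤
          ρ * (2 * leafPotential lo hi ρ I * (I + w)) := by
      nlinarith [mul_le_mul_of_nonneg_left hprev (mul_nonneg hρ0.le hI),
        mul_le_mul_of_nonneg_left hpred hI]
    nlinarith [le_of_mul_le_mul_left hmain hρ0]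
  · rw [leafPotential_of_hi_le hIhi.le, leafPotential_of_hi_le (by omega : hi ≤ I - 1)] at *
    nlinarith

end Potential

section Absorption

variable {n : ℕ} {lam alpha : ℝ} {lo hi : ℕ} {ρ : ℝ}

theorem tsum_starStep_mul_starPotential_le (hlam : 0 < lam) (hρ : 1 / 2 ≤ ρ) (hρ1 : ρ ≤ 1)
    (hinf : ∀ I : ℕ, lo < I → I ≤ hi →
      2 * I * (1 - ρ) ≤ ρ * (lam * (I : ℝ) ^ (1 + alpha)))
    (hgrow : ∀ I : ℕ, lo < I → I < hi → I ≤ n →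
      ρ + I * (1 - ρ) ≤ ρ * (lam * (n - I)) * (1 - ρ))
    (s : Bool × ℕ) :
    ∑' J, starStep n lam alpha s J * ENNReal.ofReal (starPotential lo hi ρ J) ≤
      ENNReal.ofReal (starPotential lo hi ρ s) + ENNReal.ofReal (ρ ^ (hi - lo)) := by
  have hP := starPotential_nonneg (lo := lo) (hi := hi) (by linarith : 0 ≤ ρ)
  have hm : 0 ≤ ρ ^ (hi - lo) := pow_nonneg (by linarith) _
  rw [← ENNReal.ofReal_add (hP s) hm]
  obtain ⟨_ | _, I⟩ := s
  · by_cases h : I = 0 ∨ n < I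
    · simp only [starStep, h, if_true, ite_mul, one_mul, zero_mul, tsum_ite_eq]
      exact ENNReal.ofReal_le_ofReal (le_add_of_nonneg_right hm)
    push Not at h
    have hw : 0 < lam * (I : ℝ) ^ (1 + alpha) := by have := h.1; positivity
    rw [tsum_starStep_false_mul hlam h.1 h.2 hP]
    refine ENNReal.ofReal_le_ofReal ((div_le_iff₀ (by positivity)).mpr ?_)
    exact starPotential_false_drift hρ hρ1 hw.le (hinf I)
  · by_cases h : n < I
    · simp only [starStep, h, if_true, ite_mul, one_mul, zero_mul, tsum_ite_eq]
      exact ENNReal.ofReal_le_ofReal (le_add_of_nonneg_right hm)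
    push Not at h
    have hL : 0 ≤ lam * ((n : ℝ) - I) := mul_nonneg hlam.le (by simp [h])
    rw [tsum_starStep_true_mul hlam h hP]
    refine ENNReal.ofReal_le_ofReal ((div_le_iff₀ (by positivity)).mpr ?_)
    exact starPotential_true_drift hρ hρ1 hL fun hlo hhi => hgrow I hlo hhi h

theorem starDist_false_zero_le (hlam : 0 < lam) (hρ : 1 / 2 ≤ ρ) (hρ1 : ρ ≤ 1)
    (hinf : ∀ I : ℕ, lo < I → I ≤ hi →
      2 * I * (1 - ρ) ≤ ρ * (lam * (I : ℝ) ^ (1 + alpha)))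
    (hgrow : ∀ I : ℕ, lo < I → I < hi → I ≤ n →
      ρ + I * (1 - ρ) ≤ ρ * (lam * (n - I)) * (1 - ρ))
    {I0 : ℕ} (hI0 : hi ≤ I0) (t : ℕ) :
    starDist n lam alpha (true, I0) t (false, 0) ≤ ENNReal.ofReal (ρ ^ (hi - lo) * (1 + t)) := by
  have hm : 0 ≤ ρ ^ (hi - lo) := pow_nonneg (by linarith) _
  have habs : 1 ≤ ENNReal.ofReal (starPotential lo hi ρ (false, 0)) := by
    simp [starPotential, leafPotential]
  refine (markovDist_le_of_drift (tsum_starStep_le_one hlam)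
    (tsum_starStep_mul_starPotential_le hlam hρ hρ1 hinf hgrow) _ habs t).trans_eq ?_
  rw [starPotential, leafPotential_of_hi_le hI0, ← ENNReal.ofReal_natCast,
    ← ENNReal.ofReal_mul (by positivity), ← ENNReal.ofReal_add hm (by positivity)]
  ring_nf

end Absorption

section Parameters

open Real

theorem rpow_div_rpow_abs_le {x y k : ℝ} (α : ℝ) (hx : 0 < x) (hk : 1 ≤ k) (hky : x / k ≤ y)
    (hyx : y ≤ x) : x ^ α / k ^ |α| ≤ y ^ α := by
  have hk0 : 0 < k := by linarith
  have hy : 0 < y := (div_pos hx hk0).trans_le hky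
  rcases le_or_gt 0 α with hα | hα
  · rw [abs_of_nonneg hα, ← div_rpow hx.le hk0.le]
    exact rpow_le_rpow (by positivity) hky hα
  · calc x ^ α / k ^ |α| ≤ x ^ α := div_le_self (by positivity) (one_le_rpow hk (abs_nonneg α))
      _ ≤ y ^ α := rpow_le_rpow_of_nonpos hy hyx hα.le

theorem rpow_two_add_mul_rpow_one_add {a b : ℝ} (α : ℝ) (ha : 0 < a) (hb : 0 < b) :
    a ^ (2 + α) * b ^ (1 + α) = a * (a * b) ^ α * (a * b) := by
  rw [mul_rpow ha.le hb.le, show 2 + α = 1 + (1 + α) by ring, rpow_add ha, rpow_add ha,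
    rpow_add hb, rpow_one, rpow_one]
  ring

variable {lam alpha x s ρ : ℝ}

theorem center_infection_dominates (hlam : 0 < lam) (hx : 0 < x) (hsq : s ^ 2 = lam * x ^ alpha * x)
    (hs : 8 * 8 ^ |alpha| ≤ s) (hρ : 1 / 2 ≤ ρ) (hρs : 1 - ρ = s / x) {y : ℝ} (hy : x / 8 ≤ y)
    (hyx : y ≤ x) : 2 * y * (1 - ρ) ≤ ρ * (lam * y ^ (1 + alpha)) := by
  have hy0 : 0 < y := by linarith
  have h8 : 0 < (8 : ℝ) ^ |alpha| := by positivity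
  have hrate : s ^ 2 / (8 ^ |alpha| * x) ≤ lam * y ^ alpha := by
    calc s ^ 2 / (8 ^ |alpha| * x) = lam * (x ^ alpha / 8 ^ |alpha|) := by
          rw [hsq]; field_simp
      _ ≤ lam * y ^ alpha := by gcongr; exact rpow_div_rpow_abs_le alpha hx (by norm_num) hy hyx
  have hs0 : 0 ≤ s := by linarith
  have hs8 : 8 * s / x ≤ s ^ 2 / (8 ^ |alpha| * x) := by
    rw [div_le_div_iff₀ hx (by positivity)]
    nlinarith [mul_nonneg (mul_nonneg hs0 hx.le) (sub_nonneg.2 hs)]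
  have hsx : 0 ≤ s / x := div_nonneg hs0 hx.le
  have hA : 4 * (s / x) ≤ ρ * (lam * y ^ alpha) := by
    have hA0 : 8 * (s / x) ≤ lam * y ^ alpha := by rw [← mul_div_assoc]; linarith
    nlinarith [mul_le_mul_of_nonneg_right hρ (hsx.trans (by linarith : s / x ≤ lam * y ^ alpha))]
  rw [rpow_add hy0, rpow_one, hρs]
  nlinarith [mul_le_mul_of_nonneg_left hA hy0.le]

theorem leaf_infection_dominates {n I : ℝ} (hlam1 : lam ≤ 1) (hx : x = lam * n) (hxpos : 0 < x)
    (hs : 8 ≤ s) (hρ : 1 / 2 ≤ ρ) (hρ1 : ρ ≤ 1) (hρs : 1 - ρ = s / x) (hI0 : 0 ≤ I)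
    (hI : I ≤ x / 4) : ρ + I * (1 - ρ) ≤ ρ * (lam * (n - I)) * (1 - ρ) := by
  have hL : 3 * x / 4 ≤ lam * (n - I) := by nlinarith
  have hsx : 0 ≤ s / x := div_nonneg (by linarith) hxpos.le
  have hIs : I * (s / x) ≤ s / 4 := by
    calc I * (s / x) ≤ x / 4 * (s / x) := mul_le_mul_of_nonneg_right hI hsx
      _ = s / 4 := by field_simp
  have hLs : 3 * s / 8 ≤ ρ * (lam * (n - I)) * (s / x) := by
    calc 3 * s / 8 = 1 / 2 * (3 * x / 4) * (s / x) := by field_simp; norm_num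
      _ ≤ ρ * (lam * (n - I)) * (s / x) := by gcongr
  rw [hρs]
  linarith

theorem one_sub_div_pow_ceil_sub_ceil_le_exp (hx : 16 ≤ x) (hs : 0 ≤ s) (hsx : s ≤ x) :
    (1 - s / x) ^ (⌈x / 4⌉₊ - ⌈x / 8⌉₊) ≤ exp (-(s / 16)) := by
  have hx0 : 0 < x := by linarith
  have hK : x / 16 ≤ ((⌈x / 4⌉₊ - ⌈x / 8⌉₊ : ℕ) : ℝ) := by
    rw [Nat.cast_sub (Nat.ceil_le_ceil (by linarith))]
    linarith [Nat.le_ceil (x / 4), Nat.ceil_lt_add_one (by positivity : 0 ≤ x / 8)]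
  calc (1 - s / x) ^ (⌈x / 4⌉₊ - ⌈x / 8⌉₊)
      ≤ exp (-(s / x)) ^ (⌈x / 4⌉₊ - ⌈x / 8⌉₊) := by
        gcongr
        · rw [sub_nonneg, div_le_one hx0]; exact hsx
        · exact one_sub_le_exp_neg _
    _ = exp (-(((⌈x / 4⌉₊ - ⌈x / 8⌉₊ : ℕ) : ℝ) * (s / x))) := by rw [← exp_nat_mul]; ring_nf
    _ ≤ exp (-(s / 16)) := by
        gcongr
        calc s / 16 = x / 16 * (s / x) := by field_simp
          _ ≤ _ := by gcongr

end Parameters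

section Survival

open Real

theorem starDist_false_zero_le_exp {n : ℕ} {lam alpha : ℝ} (hn : 0 < n) (hlam0 : 0 < lam)
    (hlam1 : lam < 1) (hcond : lam * (lam * n) ^ alpha ≤ 1) {I0 : ℕ} (hI0 : lam * n / 4 ≤ I0)
    (hs : 8 * 8 ^ |alpha| ≤ √(lam ^ (2 + alpha) * (n : ℝ) ^ (1 + alpha))) (t : ℕ) :
    starDist n lam alpha (true, I0) t (false, 0) ≤
      ENNReal.ofReal (exp (-(√(lam ^ (2 + alpha) * (n : ℝ) ^ (1 + alpha)) / 16)) * (1 + t)) := by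
  set s := √(lam ^ (2 + alpha) * (n : ℝ) ^ (1 + alpha)) with hs_def
  set x := lam * n with hx
  have hx0 : 0 < x := by positivity
  have hs8 : 8 ≤ s := by nlinarith [one_le_rpow (by norm_num : (1 : ℝ) ≤ 8) (abs_nonneg alpha)]
  have hsq : s ^ 2 = lam * x ^ alpha * x := by
    rw [hs_def, sq_sqrt (by positivity), rpow_two_add_mul_rpow_one_add alpha hlam0 (by positivity)]
  -- `2 s ≤ s ^ 2 = β ≤ x` by `hcond`; this keeps `ρ = 1 - s/x` above `1/2`.
  have hsx : 2 * s ≤ x := by nlinarith [mul_le_mul_of_nonneg_right hcond hx0.le]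
  have hρh : 1 / 2 ≤ 1 - s / x := by
    rw [le_sub_comm, div_le_iff₀ hx0]; linarith
  have hρ1 : 1 - s / x ≤ 1 := by linarith [div_nonneg (by linarith : 0 ≤ s) hx0.le]
  have hρs : 1 - (1 - s / x) = s / x := by ring
  refine (starDist_false_zero_le (lo := ⌈x / 8⌉₊) (hi := ⌈x / 4⌉₊) hlam0 hρh hρ1 ?_ ?_
    (Nat.ceil_le.mpr hI0) t).trans ?_
  · intro I hlo hhi
    have hlo' : x / 8 ≤ I := (Nat.le_ceil _).trans (by exact_mod_cast hlo.le)
    have hhi' : (I : ℝ) ≤ x := by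
      have : (I : ℝ) < x / 4 + 1 :=
        (Nat.cast_le.mpr hhi).trans_lt (Nat.ceil_lt_add_one (by positivity))
      linarith
    exact center_infection_dominates hlam0 hx0 hsq hs hρh hρs hlo' hhi'
  · intro I _ hhi _
    exact leaf_infection_dominates hlam1.le hx hx0 hs8 hρh hρ1 hρs (Nat.cast_nonneg I)
      (Nat.lt_ceil.mp hhi).le
  · gcongr
    exact one_sub_div_pow_ceil_sub_ceil_le_exp (by linarith) (by linarith) (by linarith)

theorem tendsto_exp_neg_mul_ceil_two_rpow :
    Tendsto (fun s : ℝ => exp (-(s / 16)) * (1 + ⌈(2 : ℝ) ^ (1 / 32 * s)⌉₊)) atTop (nhds 0) := by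
  have hbound : ∀ s : ℝ, 0 ≤ s → exp (-(s / 16)) * (1 + ⌈(2 : ℝ) ^ (1 / 32 * s)⌉₊) ≤
      3 * exp (-(s / 32)) := by
    intro s hs
    have h2 : (2 : ℝ) ^ (1 / 32 * s) ≤ exp (s / 32) := by
      rw [← exp_one_rpow]
      exact (rpow_le_rpow (by norm_num) (by linarith [add_one_le_exp 1] : (2 : ℝ) ≤ exp 1)
        (by positivity)).trans_eq (by ring_nf)
    have hceil := Nat.ceil_lt_add_one (by positivity : (0 : ℝ) ≤ 2 ^ (1 / 32 * s))
    have hexp : exp (-(s / 16)) * exp (s / 32) = exp (-(s / 32)) := by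
      rw [← exp_add]; ring_nf
    have hle : exp (-(s / 16)) ≤ exp (-(s / 32)) := exp_le_exp.mpr (by linarith)
    nlinarith [exp_pos (-(s / 16))]
  have hlim : Tendsto (fun s : ℝ => 3 * exp (-(s / 32))) atTop (nhds 0) := by
    have hdiv := tendsto_id.atTop_div_const (by norm_num : (0 : ℝ) < 32)
    simpa using (tendsto_exp_atBot.comp (tendsto_neg_atTop_atBot.comp hdiv)).const_mul 3
  exact tendsto_of_tendsto_of_tendsto_of_le_of_le' tendsto_const_nhds hlim
    (Eventually.of_forall fun s => by positivity) ((eventually_ge_atTop 0).mono hbound)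

end Survival

theorem star_survival_lower_aas_general (alpha : ℝ) (lam : ℕ → ℝ)
    (hlam : ∀ n, 0 < lam n ∧ lam n < 1)
    (hcond : ∀ n : ℕ, lam n * (lam n * n) ^ alpha ≤ 1)
    (hbeta : Tendsto (fun n : ℕ => lam n ^ (2 + alpha) * (n : ℝ) ^ (1 + alpha))
      atTop atTop)
    (I0 : ℕ → ℕ) (hI0 : ∀ n, lam n * n / 4 ≤ (I0 n : ℝ)) :
    ∃ c : ℝ, 0 < c ∧
      Tendsto (fun n : ℕ =>
          1 - starDist n (lam n) alpha ((true : Bool), I0 n)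
            ⌈(2 : ℝ) ^ (c * Real.sqrt (lam n ^ (2 + alpha) * (n : ℝ) ^ (1 + alpha)))⌉₊
            ((false : Bool), 0))
        atTop (nhds 1) := by
  refine ⟨1 / 32, by norm_num, ?_⟩
  have hsqrt := Real.tendsto_sqrt_atTop.comp hbeta
  have hlim := ENNReal.tendsto_ofReal (tendsto_exp_neg_mul_ceil_two_rpow.comp hsqrt)
  rw [ENNReal.ofReal_zero] at hlim
  convert ENNReal.Tendsto.sub tendsto_const_nhds ?_ (Or.inl ENNReal.one_ne_top) using 2
  · exact (tsub_zero 1).symm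
  refine tendsto_of_tendsto_of_tendsto_of_le_of_le' tendsto_const_nhds hlim
    (Eventually.of_forall fun _ => zero_le) ?_
  filter_upwards [hsqrt.eventually_ge_atTop (8 * 8 ^ |alpha|), eventually_gt_atTop 0] with n hs hn
  exact starDist_false_zero_le_exp hn (hlam n).1 (hlam n).2 (hcond n) (hI0 n) hs _

/-- Started with infected center and at least λn/4 infected leaves, the
star infection chain survives for at least 2^{c√β} steps asymptotically almost surely. -/
theorem star_survival_lower_aas (alpha : ℝ) (ha : -1 < alpha) (lam : ℕ → ℝ)
    (hlam : ∀ n, 0 < lam n ∧ lam n < 1)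
    (hcond : ∀ n : ℕ, lam n * (lam n * n) ^ alpha ≤ 1)
    (hbeta : Tendsto (fun n : ℕ => lam n ^ (2 + alpha) * (n : ℝ) ^ (1 + alpha))
      atTop atTop)
    (I0 : ℕ → ℕ) (hI0 : ∀ n, lam n * n / 4 ≤ (I0 n : ℝ)) (hI0n : ∀ n, I0 n ≤ n) :
    ∃ c : ℝ, 0 < c ∧
      Tendsto (fun n : ℕ =>
          1 - starDist n (lam n) alpha ((true : Bool), I0 n)
            ⌈(2 : ℝ) ^ (c * Real.sqrt (lam n ^ (2 + alpha) * (n : ℝ) ^ (1 + alpha)))⌉₊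
            ((false : Bool), 0))
        atTop (nhds 1) :=
  star_survival_lower_aas_general alpha lam hlam hcond hbeta I0 hI0
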